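/- arXiv:2412.09686 — 3 statements merged into one kernel-verified Lean document; each statement's English description precedes it below -/
import Mathlib

section
/- If all hypotheses h in version space V_r with distance d(h,c) ≥ Δ(V_r)/(2Θ) from the target c are removed to form V_{r+1}, then Δ(V_{r+1}) ≤ Δ(V_r)/2, where Θ is the disagreement coefficient. -/
/-! Every surviving hypothesis lies in the ball `B(c, ε)` with `ε = Δ(V_r)/(2Θ)`, so
`DIS(V_{r+1}) ⊆ DIS(B(c, ε))`, whose mass is at most `Θ ε = Δ(V_r)/2` by the definition of the
disagreement coefficient. If `ε ≤ 0`, no hypothesis survives at all. -/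

open MeasureTheory

namespace VersionSpace

variable {X Y : Type*}

def disagreementRegion (V : Set (X → Y)) : Set X :=
  {x | ∃ h₁ ∈ V, ∃ h₂ ∈ V, h₁ x ≠ h₂ x}

theorem disagreementRegion_mono : Monotone (disagreementRegion (X := X) (Y := Y)) :=
  fun _ _ hVW _ ⟨h₁, hh₁, h₂, hh₂, hne⟩ => ⟨h₁, hVW hh₁, h₂, hVW hh₂, hne⟩

@[simp]
theorem disagreementRegion_empty : disagreementRegion (∅ : Set (X → Y)) = ∅ := by
  simp [disagreementRegion]

variable [MeasurableSpace X]

def errDist (μ : Measure X) (h₁ h₂ : X → Y) : ℝ :=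
  μ.real {x | h₁ x ≠ h₂ x}

theorem errDist_nonneg (μ : Measure X) (h₁ h₂ : X → Y) : 0 ≤ errDist μ h₁ h₂ :=
  measureReal_nonneg

theorem errDist_comm (μ : Measure X) (h₁ h₂ : X → Y) : errDist μ h₁ h₂ = errDist μ h₂ h₁ := by
  simp only [errDist, ne_comm]

end VersionSpace

open VersionSpace

theorem stmt_0_general {X : Type*} [MeasurableSpace X] (μ : Measure X) [IsProbabilityMeasure μ]
    (C : Set (X → Bool)) (c : X → Bool)
    (DIS : Set (X → Bool) → Set X)
    (hDIS : ∀ V, DIS V = {x | ∃ h1 ∈ V, ∃ h2 ∈ V, h1 x ≠ h2 x})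
    (d : (X → Bool) → (X → Bool) → ℝ)
    (hd : ∀ h1 h2, d h1 h2 = (μ {x | h1 x ≠ h2 x}).toReal)
    (Θ : ℝ)
    (hcoef : ∀ ε : ℝ, 0 < ε → (μ (DIS {h | h ∈ C ∧ d c h ≤ ε})).toReal ≤ Θ * ε)
    (Vr Vr1 : Set (X → Bool)) (hVrC : Vr ⊆ C)
    (hsub : Vr1 ⊆ {h | h ∈ Vr ∧ d h c < (μ (DIS Vr)).toReal / (2 * Θ)}) :
    (μ (DIS Vr1)).toReal ≤ (μ (DIS Vr)).toReal / 2 := by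
  obtain rfl : DIS = disagreementRegion := funext hDIS
  obtain rfl : d = errDist μ := funext fun h₁ => funext (hd h₁)
  set ε := μ.real (disagreementRegion Vr) / (2 * Θ) with hε_def
  rcases le_or_gt ε 0 with hε | hε
  · have hempty : Vr1 = ∅ := Set.eq_empty_of_forall_notMem fun h hh =>
      ((hsub hh).2.trans_le hε).not_ge (errDist_nonneg μ h c)
    simp only [hempty, disagreementRegion_empty, measure_empty, ENNReal.toReal_zero]
    positivity
  · have hΘ : Θ ≠ 0 := by
      rintro rfl
      simp [hε_def] at hε
    have hball : Vr1 ⊆ {h | h ∈ C ∧ errDist μ c h ≤ ε} := fun h hh =>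
      ⟨hVrC (hsub hh).1, (errDist_comm μ c h).trans_le (hsub hh).2.le⟩
    calc μ.real (disagreementRegion Vr1)
        ≤ μ.real (disagreementRegion {h | h ∈ C ∧ errDist μ c h ≤ ε}) :=
          measureReal_mono (disagreementRegion_mono hball)
      _ ≤ Θ * ε := hcoef ε hε
      _ = μ.real (disagreementRegion Vr) / 2 := by rw [hε_def]; field_simp

/-- If all hypotheses `h` in the version space `Vr` with distance `d h c ≥ Δ(Vr)/(2Θ)`
from the target `c` are removed to form `Vr1`, then `Δ(Vr1) ≤ Δ(Vr)/2`, where `Θ` is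
(an upper bound realized by) the disagreement coefficient. -/
theorem stmt_0 {X : Type*} [MeasurableSpace X] (μ : Measure X) [IsProbabilityMeasure μ]
    (C : Set (X → Bool)) (c : X → Bool) (hc : c ∈ C)
    (DIS : Set (X → Bool) → Set X)
    (hDIS : ∀ V, DIS V = {x | ∃ h1 ∈ V, ∃ h2 ∈ V, h1 x ≠ h2 x})
    (d : (X → Bool) → (X → Bool) → ℝ)
    (hd : ∀ h1 h2, d h1 h2 = (μ {x | h1 x ≠ h2 x}).toReal)
    (Θ : ℝ) (hΘ : 1 ≤ Θ)
    (hcoef : ∀ ε : ℝ, 0 < ε → (μ (DIS {h | h ∈ C ∧ d c h ≤ ε})).toReal ≤ Θ * ε)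
    (Vr Vr1 : Set (X → Bool)) (hVrC : Vr ⊆ C) (hcVr : c ∈ Vr)
    (hsub : Vr1 ⊆ {h | h ∈ Vr ∧ d h c < (μ (DIS Vr)).toReal / (2 * Θ)}) :
    (μ (DIS Vr1)).toReal ≤ (μ (DIS Vr)).toReal / 2 :=
  stmt_0_general μ C c DIS hDIS d hd Θ hcoef Vr Vr1 hVrC hsub
end

section
/- In the agnostic setting, if Δ(V_r) ≥ 8Θν and h ∈ V_r satisfies d(h, h*) ≥ Δ(V_r)/(2Θ), then the conditional error satisfies err^{D_r}(h) ≥ 3/(8Θ). -/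
theorem stmt_4_general (Δ ν Θ d errDrH : ℝ)
    (hΘ : 1 ≤ Θ) (hΔpos : 0 < Δ)
    (hbound : d ≤ Δ * errDrH + ν)
    (hΔ : 8 * Θ * ν ≤ Δ)
    (hfar : Δ / (2 * Θ) ≤ d) :
    3 / (8 * Θ) ≤ errDrH := by
  have hΘpos : 0 < Θ := by linarith
  have hΔ_le : Δ ≤ 2 * Θ * (Δ * errDrH) + Δ / 4 :=
    calc Δ ≤ 2 * Θ * d := by rwa [div_le_iff₀ (by positivity), mul_comm] at hfar
      _ ≤ 2 * Θ * (Δ * errDrH + ν) := by gcongr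
      _ ≤ 2 * Θ * (Δ * errDrH) + Δ / 4 := by linarith
  have h : 3 * Δ ≤ 8 * Θ * errDrH * Δ := by linarith
  rw [div_le_iff₀ (by positivity)]
  linarith [le_of_mul_le_mul_right h hΔpos]

/-- Agnostic setting: if `Δ(V_r) ≥ 8Θν` and `h ∈ V_r` satisfies `d(h,h*) ≥ Δ(V_r)/(2Θ)`,
then the conditional error satisfies `err^{D_r}(h) ≥ 3/(8Θ)`, given the inequality
`d(h,h*) ≤ Δ(V_r)·err^{D_r}(h) + ν`. -/
theorem stmt_4 (Δ ν Θ d errDrH : ℝ)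
    (hΘ : 1 ≤ Θ) (hν : 0 ≤ ν) (hΔpos : 0 < Δ)
    (hbound : d ≤ Δ * errDrH + ν)
    (hΔ : 8 * Θ * ν ≤ Δ)
    (hfar : Δ / (2 * Θ) ≤ d) :
    3 / (8 * Θ) ≤ errDrH :=
  stmt_4_general Δ ν Θ d errDrH hΘ hΔpos hbound hΔ hfar
end

section
/- If two runs of an algorithm each output a uniformly random element from their respective finite sets H₁ and H₂ (using the same shared randomness for the random ordering), and |H₁ Δ H₂|/|H₁ ∪ H₂| ≤ ρ/4, then the probability that the two outputs differ is at most ρ/4 plus the probability contributed by the symmetric difference; in particular, selecting the first element of a shared uniformly random ordering of H₁ ∪ H₂ restricted to each H_i yields the same output with probability at least 1 − ρ/4. -/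
/-!
Under a shared ordering `e` of `U = H₁ ∪ H₂`, if the `e`-least element of `U` lies in both `H₁`
and `H₂`, it is the `e`-least element of each, so the two outputs agree. Hence the outputs can
only differ when that least element falls in `H₁ Δ H₂`, and for a uniformly random ordering the
least element is uniformly distributed on `U` (precomposing with a transposition permutes the
orderings and moves one fiber onto another), which happens with probability `|H₁ Δ H₂| / |U|`.
-/

open Finset

open scoped ENNReal

section UniformEquiv

variable {α β : Type*} [Fintype α] [DecidableEq α] [Fintype β] [DecidableEq β]

theorem card_filter_equiv_symm_apply_eq_eq (b : β) (a a' : α) :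
    #{e : α ≃ β | e.symm b = a} = #{e : α ≃ β | e.symm b = a'} :=
  card_nbij' (fun e => (Equiv.swap a a').trans e) (fun e => (Equiv.swap a a').trans e)
    (by intro e; simp +contextual) (by intro e; simp +contextual)
    (by intro e _; ext; simp) (by intro e _; ext; simp)

theorem card_filter_equiv_symm_apply_mem (b : β) (a : α) (T : Finset α) :
    #{e : α ≃ β | e.symm b ∈ T} = #T * #{e : α ≃ β | e.symm b = a} := by
  rw [card_eq_sum_card_fiberwise (s := {e : α ≃ β | e.symm b ∈ T}) (f := fun e => e.symm b)
    (t := T) (fun e he => (mem_filter.mp he).2), ← smul_eq_mul, ← sum_const]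
  refine sum_congr rfl fun a' ha' => ?_
  rw [filter_filter, ← card_filter_equiv_symm_apply_eq_eq b a' a]
  congr 1
  exact filter_congr fun e _ => ⟨And.right, fun h => ⟨h ▸ ha', h⟩⟩

theorem PMF.toOuterMeasure_uniformOfFintype_equiv_symm_apply_mem [Nonempty (α ≃ β)]
    (b : β) (T : Finset α) :
    (PMF.uniformOfFintype (α ≃ β)).toOuterMeasure {e | e.symm b ∈ T} =
      #T / Fintype.card α := by
  obtain ⟨e₀⟩ := ‹Nonempty (α ≃ β)›
  have hfiber : #{e : α ≃ β | e.symm b = e₀.symm b} ≠ 0 :=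
    card_ne_zero_of_mem (mem_filter.mpr ⟨mem_univ e₀, rfl⟩)
  have hcard : Fintype.card (α ≃ β) = Fintype.card α * #{e : α ≃ β | e.symm b = e₀.symm b} := by
    simpa using card_filter_equiv_symm_apply_mem b (e₀.symm b) univ
  rw [PMF.toOuterMeasure_uniformOfFintype_apply, Fintype.card_subtype]
  simp only [Set.mem_ofPred_eq]
  rw [hcard, card_filter_equiv_symm_apply_mem b (e₀.symm b) T, Nat.cast_mul, Nat.cast_mul,
    ENNReal.mul_div_mul_right _ _ (by exact_mod_cast hfiber) (ENNReal.natCast_ne_top _)]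

end UniformEquiv

theorem Equiv.eq_symm_bot_of_forall_le {α β : Type*} [PartialOrder β] [OrderBot β]
    {e : α ≃ β} {H : Finset α} {x : α} (hx : ∀ a ∈ H, e x ≤ e a) (hbot : e.symm ⊥ ∈ H) :
    x = e.symm ⊥ :=
  e.injective (by simpa using hx _ hbot)

theorem setOf_ne_subset_symm_bot_mem_symmDiff {α β : Type*} [DecidableEq α] [Fintype α]
    [PartialOrder β] [OrderBot β] {H₁ H₂ : Finset α} (hU : H₁ ∪ H₂ = univ)
    (out : (α ≃ β) → Finset α → α)
    (hout : ∀ (e : α ≃ β) (H : Finset α), H.Nonempty → ∀ a ∈ H, e (out e H) ≤ e a) :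
    {e | out e H₁ ≠ out e H₂} ⊆ {e | e.symm ⊥ ∈ H₁ \ H₂ ∪ H₂ \ H₁} := by
  intro e hne
  by_contra hsym
  have hU' : e.symm ⊥ ∈ H₁ ∪ H₂ := hU ▸ mem_univ _
  have hbot : ∀ H : Finset α, e.symm ⊥ ∈ H → out e H = e.symm ⊥ := fun H hH =>
    Equiv.eq_symm_bot_of_forall_le (hout e H ⟨_, hH⟩) hH
  simp only [Set.mem_ofPred_eq, mem_union, mem_sdiff] at hne hsym hU'
  exact hne ((hbot H₁ (by tauto)).trans (hbot H₂ (by tauto)).symm)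

theorem stmt_11_general {α : Type*} [Fintype α] [DecidableEq α]
    (H₁ H₂ : Finset α)
    (hU : H₁ ∪ H₂ = Finset.univ)
    (ρ : ℝ)
    (hdiff : ((H₁ \ H₂ ∪ H₂ \ H₁).card : ℝ) ≤ ρ / 4 * ((H₁ ∪ H₂).card : ℝ))
    (out : (α ≃ Fin (Fintype.card α)) → Finset α → α)
    (hout : ∀ (e : α ≃ Fin (Fintype.card α)) (H : Finset α), H.Nonempty →
      out e H ∈ H ∧ ∀ a ∈ H, e (out e H) ≤ e a) :
    (PMF.uniformOfFinset (Finset.univ : Finset (α ≃ Fin (Fintype.card α)))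
        ⟨Fintype.equivFin α, Finset.mem_univ _⟩).toOuterMeasure
      {e | out e H₁ ≠ out e H₂} ≤ ENNReal.ofReal (ρ / 4) := by
  rcases isEmpty_or_nonempty α with _ | _
  · have : {e | out e H₁ ≠ out e H₂} = ∅ :=
      Set.eq_empty_of_forall_notMem fun e _ => isEmptyElim (out e H₁)
    simp [this]
  have : NeZero (Fintype.card α) := ⟨Fintype.card_ne_zero⟩
  have : Nonempty (α ≃ Fin (Fintype.card α)) := ⟨Fintype.equivFin α⟩
  have hpos : (0 : ℝ) < Fintype.card α := by exact_mod_cast Fintype.card_pos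
  rw [hU, card_univ] at hdiff
  change (PMF.uniformOfFintype _).toOuterMeasure _ ≤ _
  calc _ ≤ (PMF.uniformOfFintype _).toOuterMeasure {e | e.symm ⊥ ∈ H₁ \ H₂ ∪ H₂ \ H₁} :=
        MeasureTheory.measure_mono <|
          setOf_ne_subset_symm_bot_mem_symmDiff hU out fun e H hH => (hout e H hH).2
    _ = #(H₁ \ H₂ ∪ H₂ \ H₁) / Fintype.card α :=
        PMF.toOuterMeasure_uniformOfFintype_equiv_symm_apply_mem _ _
    _ = ENNReal.ofReal (#(H₁ \ H₂ ∪ H₂ \ H₁) / Fintype.card α) := by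
        rw [ENNReal.ofReal_div_of_pos hpos, ENNReal.ofReal_natCast, ENNReal.ofReal_natCast]
    _ ≤ ENNReal.ofReal (ρ / 4) := ENNReal.ofReal_le_ofReal ((div_le_iff₀ hpos).mpr hdiff)

/-- Two runs output the π-minimal elements of `H₁` and `H₂` respectively, under a shared
uniformly random ordering `π` of `U = H₁ ∪ H₂`. If `|H₁ Δ H₂| ≤ (ρ/4)|U|`, then the two
outputs differ with probability at most `ρ/4`. -/
theorem stmt_11 {α : Type*} [Fintype α] [DecidableEq α]
    (H₁ H₂ : Finset α) (h₁ : H₁.Nonempty) (h₂ : H₂.Nonempty)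
    (hU : H₁ ∪ H₂ = Finset.univ)
    (ρ : ℝ) (hρ0 : 0 < ρ) (hρ1 : ρ ≤ 1)
    (hdiff : ((H₁ \ H₂ ∪ H₂ \ H₁).card : ℝ) ≤ ρ / 4 * ((H₁ ∪ H₂).card : ℝ))
    (out : (α ≃ Fin (Fintype.card α)) → Finset α → α)
    (hout : ∀ (e : α ≃ Fin (Fintype.card α)) (H : Finset α), H.Nonempty →
      out e H ∈ H ∧ ∀ a ∈ H, e (out e H) ≤ e a) :
    (PMF.uniformOfFinset (Finset.univ : Finset (α ≃ Fin (Fintype.card α)))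
        ⟨Fintype.equivFin α, Finset.mem_univ _⟩).toOuterMeasure
      {e | out e H₁ ≠ out e H₂} ≤ ENNReal.ofReal (ρ / 4) :=
  stmt_11_general H₁ H₂ hU ρ hdiff out hout
end
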